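/- The complete graph K_n is the unique graph on n vertices with maximum signless Laplacian Estrada index among all graphs on n vertices. -/

import Mathlib

/-! Expanding the exponential, `SLEE G = ∑ₖ tr (Qᵏ) / k!`. The signless Laplacian `Q = D + A` is
entrywise nonnegative and entrywise monotone in `G`, hence so is every `Qᵏ`, and each term of the
series is monotone; the term `tr Q = 2 |E(G)|` strictly increases with every added edge. -/

open scoped Classical

variable {V : Type*}

/-- The signless Laplacian matrix `Q = D + A` of a graph. -/
noncomputable def sLap (G : SimpleGraph V) [Fintype V] : Matrix V V ℝ :=
  Matrix.diagonal (fun v => (G.degree v : ℝ)) + G.adjMatrix ℝ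

theorem sLap_isHermitian (G : SimpleGraph V) [Fintype V] : (sLap G).IsHermitian := by
  unfold sLap
  rw [Matrix.IsHermitian, Matrix.conjTranspose_eq_transpose_of_trivial, Matrix.transpose_add,
    Matrix.diagonal_transpose, SimpleGraph.transpose_adjMatrix]

/-- The Laplacian matrix `L = D - A` of a graph. -/
noncomputable def lap (G : SimpleGraph V) [Fintype V] : Matrix V V ℝ :=
  Matrix.diagonal (fun v => (G.degree v : ℝ)) - G.adjMatrix ℝ

theorem lap_isHermitian (G : SimpleGraph V) [Fintype V] : (lap G).IsHermitian := by
  unfold lap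
  rw [Matrix.IsHermitian, Matrix.conjTranspose_eq_transpose_of_trivial, Matrix.transpose_sub,
    Matrix.diagonal_transpose, SimpleGraph.transpose_adjMatrix]

/-- The signless Laplacian Estrada index: the sum of `exp qᵢ` over the eigenvalues of `Q`. -/
noncomputable def SLEE (G : SimpleGraph V) [Fintype V] : ℝ :=
  ∑ i, Real.exp ((sLap_isHermitian G).eigenvalues i)

/-- The Laplacian Estrada index: the sum of `exp μᵢ` over the eigenvalues of `L`. -/
noncomputable def LEE (G : SimpleGraph V) [Fintype V] : ℝ :=
  ∑ i, Real.exp ((lap_isHermitian G).eigenvalues i)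

/-- Semi-edge walks of length `k` from `x` to `y`: a sequence of `k+1` vertices and `k`
edges of `G` such that consecutive vertices are (not necessarily distinct) endpoints of
the intervening edge. -/
def semiEdgeWalks (G : SimpleGraph V) (k : ℕ) (x y : V) :
    Set ((Fin (k + 1) → V) × (Fin k → Sym2 V)) :=
  {w | w.1 0 = x ∧ w.1 (Fin.last k) = y ∧
    ∀ i : Fin k, w.2 i ∈ G.edgeSet ∧ w.1 i.castSucc ∈ w.2 i ∧ w.1 i.succ ∈ w.2 i}

/-- Closed semi-edge walks of length `k` in `G`. -/
def closedSemiEdgeWalks (G : SimpleGraph V) (k : ℕ) :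
    Set ((Fin (k + 1) → V) × (Fin k → Sym2 V)) :=
  {w | w.1 0 = w.1 (Fin.last k) ∧
    ∀ i : Fin k, w.2 i ∈ G.edgeSet ∧ w.1 i.castSucc ∈ w.2 i ∧ w.1 i.succ ∈ w.2 i}

/-- The number of connected components of a graph. -/
noncomputable def numComponents (G : SimpleGraph V) : ℕ := Nat.card G.ConnectedComponent

/-- A cut vertex: a vertex whose removal increases the number of connected components. -/
def IsCutVertex (G : SimpleGraph V) (v : V) : Prop :=
  numComponents G < numComponents (G.induce ({v}ᶜ : Set V))

/-- The number of cut vertices of a graph. -/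
noncomputable def cutVertexCount (G : SimpleGraph V) [Fintype V] : ℕ :=
  (Finset.univ.filter (fun v => IsCutVertex G v)).card

/-- The graph obtained from `G` by adding the edge `uv`. -/
def addEdge (G : SimpleGraph V) (u v : V) : SimpleGraph V :=
  G ⊔ SimpleGraph.fromEdgeSet {s(u, v)}

/-- A block of `G`: a maximal vertex set inducing a connected subgraph with no cut vertex. -/
def IsBlock (G : SimpleGraph V) (B : Set V) : Prop :=
  (G.induce B).Connected ∧ (∀ v : B, ¬ IsCutVertex (G.induce B) v) ∧
  ∀ C : Set V, B ⊆ C → (G.induce C).Connected → (∀ v : C, ¬ IsCutVertex (G.induce C) v) →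
    B = C

open Finset Nat

namespace Matrix

variable {n : Type*} [Fintype n] [DecidableEq n]

lemma pow_apply_le_pow_apply {α : Type*} [Semiring α] [PartialOrder α] [IsOrderedRing α]
    {A B : Matrix n n α} (hA : ∀ i j, 0 ≤ A i j) (hAB : ∀ i j, A i j ≤ B i j) (k : ℕ) (i j : n) :
    (A ^ k) i j ≤ (B ^ k) i j := by
  induction k generalizing j with
  | zero => rfl
  | succ m ih =>
    rw [pow_succ, pow_succ, mul_apply, mul_apply]
    exact sum_le_sum fun l _ =>
      mul_le_mul (ih l) (hAB l j) (hA l j) ((pow_apply_nonneg hA m i l).trans (ih l))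

lemma trace_pow_le_trace_pow {α : Type*} [Semiring α] [PartialOrder α] [IsOrderedRing α]
    {A B : Matrix n n α} (hA : ∀ i j, 0 ≤ A i j) (hAB : ∀ i j, A i j ≤ B i j) (k : ℕ) :
    (A ^ k).trace ≤ (B ^ k).trace :=
  sum_le_sum fun i _ => pow_apply_le_pow_apply hA hAB k i i

lemma IsHermitian.trace_pow {𝕜 : Type*} [RCLike 𝕜] {A : Matrix n n 𝕜} (hA : A.IsHermitian)
    (k : ℕ) : (A ^ k).trace = ∑ i, (hA.eigenvalues i : 𝕜) ^ k := by
  rw [← cfc_pow_id (R := ℝ) A k hA.isSelfAdjoint, hA.cfc_eq, IsHermitian.cfc,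
    Unitary.conjStarAlgAut_apply, trace_mul_cycle, Unitary.coe_star_mul_self, one_mul,
    trace_diagonal]
  simp

lemma IsHermitian.hasSum_trace_pow_div_factorial {A : Matrix n n ℝ} (hA : A.IsHermitian) :
    HasSum (fun k => (A ^ k).trace / k !) (∑ i, Real.exp (hA.eigenvalues i)) := by
  simp_rw [hA.trace_pow, sum_div, Real.exp_eq_exp_ℝ]
  exact hasSum_sum fun i _ => NormedSpace.expSeries_div_hasSum_exp _

end Matrix

section

variable [Fintype V]

lemma sLap_apply_nonneg (G : SimpleGraph V) (i j : V) : 0 ≤ sLap G i j := by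
  rw [sLap, Matrix.add_apply, Matrix.diagonal_apply, SimpleGraph.adjMatrix_apply]
  split_ifs <;> positivity

lemma sLap_apply_mono {G H : SimpleGraph V} (h : G ≤ H) (i j : V) : sLap G i j ≤ sLap H i j := by
  have hdeg : (G.degree i : ℝ) ≤ H.degree i := by exact_mod_cast SimpleGraph.degree_le_of_le h
  rw [sLap, sLap, Matrix.add_apply, Matrix.add_apply, Matrix.diagonal_apply,
    Matrix.diagonal_apply, SimpleGraph.adjMatrix_apply, SimpleGraph.adjMatrix_apply]
  split_ifs <;> first | linarith | exact absurd (h ‹_›) ‹_›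

lemma trace_sLap (G : SimpleGraph V) : (sLap G).trace = 2 * #G.edgeFinset := by
  rw [sLap, Matrix.trace_add, Matrix.trace_diagonal, SimpleGraph.trace_adjMatrix, add_zero]
  exact_mod_cast G.sum_degrees_eq_twice_card_edges

lemma hasSum_SLEE (G : SimpleGraph V) :
    HasSum (fun k => (sLap G ^ k).trace / k !) (SLEE G) :=
  (sLap_isHermitian G).hasSum_trace_pow_div_factorial

theorem SLEE_strictMono : StrictMono (fun G : SimpleGraph V => SLEE G) := by
  intro G H h
  refine hasSum_lt (fun k => ?_) (i := 1) ?_ (hasSum_SLEE G) (hasSum_SLEE H)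
  · exact div_le_div_of_nonneg_right
      (Matrix.trace_pow_le_trace_pow (sLap_apply_nonneg G) (sLap_apply_mono h.le) k) (by positivity)
  · simpa [trace_sLap] using card_lt_card (SimpleGraph.edgeFinset_ssubset_edgeFinset.2 h)

end

/-- the complete graph uniquely maximizes SLEE among graphs on `n` vertices. -/
theorem SLEE_lt_top_of_ne_top [Fintype V] (H : SimpleGraph V) (h : H ≠ ⊤) :
    SLEE H < SLEE (⊤ : SimpleGraph V) :=
  SLEE_strictMono (lt_top_iff_ne_top.2 h)
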